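/- arXiv:1602.03828 — 6 statements merged into one kernel-verified Lean document; each statement's English description precedes it below -/
import Mathlib

section
/- Fix any p with 0 < p < 1/2. For each integer L ≥ 2 let P_0 = (1−p)·Binomial(L−1, p) + p·Binomial(L−1, 1−p) and P_1 = p·Binomial(L−1, p) + (1−p)·Binomial(L−1, 1−p) be mixture distributions on {0,1,…,L−1}, and let D(P_0,P_1) denote the Chernoff information between P_0 and P_1. Then lim_{L→∞} D(P_0,P_1) = KL(0.5‖p) = 0.5·log(0.5/p) + 0.5·log(0.5/(1−p)). -/
open Filter

noncomputable section
attribute [local instance] Classical.propDecidable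

/-- KL divergence between Bernoulli(1/2) and Bernoulli(θ):
`KL(0.5‖θ) = 0.5·log(0.5/θ) + 0.5·log(0.5/(1−θ))`. -/
def KLhalf (θ : ℝ) : ℝ := 0.5 * Real.log (0.5 / θ) + 0.5 * Real.log (0.5 / (1 - θ))

/-- Poisson probability mass function with mean `μ`. -/
def poissonP (μ : ℝ) (k : ℕ) : ℝ := Real.exp (-μ) * μ ^ k / (Nat.factorial k)

/-- Chernoff information between two distributions on a finite alphabet:
`D(P₀,P₁) = −inf_{0 ≤ τ ≤ 1} log Σ_y P₀(y)^τ P₁(y)^{1−τ}`. -/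
def chernoffInfo {α : Type*} [Fintype α] (P0 P1 : α → ℝ) : ℝ :=
  - sInf ((fun τ : ℝ => Real.log (∑ y, P0 y ^ τ * P1 y ^ (1 - τ))) '' Set.Icc 0 1)

/-- `P₀ = (1−p)·Binomial(L−1,p) + p·Binomial(L−1,1−p)`, as a mass function on `{0,…,L−1}`:
`P₀(i) = C(L−1,i)·(p^i (1−p)^{L−i} + (1−p)^i p^{L−i})`. -/
def Pmix0 (L : ℕ) (p : ℝ) : Fin L → ℝ := fun i =>
  ((L-1).choose i : ℝ) *
    (p ^ (i:ℕ) * (1-p) ^ (L - (i:ℕ)) + (1-p) ^ (i:ℕ) * p ^ (L - (i:ℕ)))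

/-- `P₁ = p·Binomial(L−1,p) + (1−p)·Binomial(L−1,1−p)`, as a mass function on `{0,…,L−1}`:
`P₁(i) = C(L−1,i)·(p^{i+1} (1−p)^{L−i−1} + (1−p)^{i+1} p^{L−i−1})`. -/
def Pmix1 (L : ℕ) (p : ℝ) : Fin L → ℝ := fun i =>
  ((L-1).choose i : ℝ) *
    (p ^ ((i:ℕ)+1) * (1-p) ^ (L - (i:ℕ) - 1) + (1-p) ^ ((i:ℕ)+1) * p ^ (L - (i:ℕ) - 1))

/-!
Reflecting `i ↦ L - 1 - i` swaps the two mixtures, so the Chernoff exponent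
`τ ↦ log Σ P₀^τ P₁^(1-τ)` is symmetric about `τ = 1/2`, and AM-GM applied to the values at `τ` and
`1 - τ` puts its minimum at `τ = 1/2`: the Chernoff information is `-log` of the Bhattacharyya
coefficient `Σ √(P₀ P₁)`. With `α, β` the Binomial(L-1, p) and Binomial(L-1, 1-p) masses,
`P₀ = (1-p)α + pβ` and `P₁ = pα + (1-p)β`, so `P₀P₁ = p(1-p)(α+β)² + (1-2p)²αβ` and
`√(αβ) = C(L-1,i) √(p(1-p))^(L-1)`. Hence the coefficient lies between `2√(p(1-p))` and
`2√(p(1-p)) + |1-2p| (2√(p(1-p)))^(L-1)`, and as `2√(p(1-p)) < 1` it tends to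
`2√(p(1-p)) = exp (-KL(0.5‖p))`.
-/

open Real Finset

def bhattacharyya {α : Type*} [Fintype α] (P Q : α → ℝ) : ℝ := ∑ y, √(P y * Q y)

lemma two_sqrt_mul_le_rpow_mul_rpow_add {x y : ℝ} (hx : 0 < x) (hy : 0 < y) (τ : ℝ) :
    2 * √(x * y) ≤ x ^ τ * y ^ (1 - τ) + y ^ τ * x ^ (1 - τ) := by
  set u := x ^ τ * y ^ (1 - τ)
  set v := y ^ τ * x ^ (1 - τ)
  have huv : u * v = x * y := by
    rw [show u * v = (x ^ τ * x ^ (1 - τ)) * (y ^ τ * y ^ (1 - τ)) by ring,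
      ← rpow_add hx, ← rpow_add hy, add_sub_cancel, rpow_one, rpow_one]
  have hu : 0 ≤ u := by positivity
  have hv : 0 ≤ v := by positivity
  calc 2 * √(x * y) = 2 * √u * √v := by rw [← huv, sqrt_mul hu, mul_assoc]
    _ ≤ √u ^ 2 + √v ^ 2 := two_mul_le_add_sq _ _
    _ = u + v := by rw [sq_sqrt hu, sq_sqrt hv]

theorem chernoffInfo_eq_neg_log_bhattacharyya {α : Type*} [Fintype α] [Nonempty α]
    {P Q : α → ℝ} (hP : ∀ y, 0 < P y) (hQ : ∀ y, 0 < Q y) (σ : α ≃ α)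
    (hPσ : ∀ y, P (σ y) = Q y) (hQσ : ∀ y, Q (σ y) = P y) :
    chernoffInfo P Q = -log (bhattacharyya P Q) := by
  have hhalf : ∑ y, P y ^ (1 / 2 : ℝ) * Q y ^ (1 - 1 / 2 : ℝ) = bhattacharyya P Q :=
    sum_congr rfl fun y _ => by
      rw [show (1 : ℝ) - 1 / 2 = 1 / 2 by norm_num, ← sqrt_eq_rpow, ← sqrt_eq_rpow,
        ← sqrt_mul (hP y).le]
  have hge (τ : ℝ) : bhattacharyya P Q ≤ ∑ y, P y ^ τ * Q y ^ (1 - τ) := by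
    have hswap : ∑ y, Q y ^ τ * P y ^ (1 - τ) = ∑ y, P y ^ τ * Q y ^ (1 - τ) :=
      Fintype.sum_equiv σ _ _ fun y => by rw [hPσ, hQσ]
    have hsum := sum_le_sum fun y (_ : y ∈ univ) =>
      two_sqrt_mul_le_rpow_mul_rpow_add (hP y) (hQ y) τ
    rw [← mul_sum, sum_add_distrib, hswap] at hsum
    unfold bhattacharyya
    linarith
  have hpos : 0 < bhattacharyya P Q :=
    sum_pos (fun y _ => sqrt_pos.2 (mul_pos (hP y) (hQ y))) univ_nonempty
  have hleast : IsLeast ((fun τ : ℝ => log (∑ y, P y ^ τ * Q y ^ (1 - τ))) '' Set.Icc 0 1)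
      (log (bhattacharyya P Q)) :=
    ⟨⟨1 / 2, by norm_num, congrArg log hhalf⟩,
      by rintro _ ⟨τ, _, rfl⟩; exact log_le_log hpos (hge τ)⟩
  rw [chernoffInfo, hleast.csInf_eq]

lemma sqrt_swapped_mixture_mul_mem_Icc {s t a b : ℝ} (hs : 0 ≤ s) (ht : 0 ≤ t) (ha : 0 ≤ a)
    (hb : 0 ≤ b) :
    √((t * a + s * b) * (s * a + t * b))
      ∈ Set.Icc (√(s * t) * (a + b)) (√(s * t) * (a + b) + |t - s| * √(a * b)) := by
  set X := √(s * t) * (a + b)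
  set Y := |t - s| * √(a * b)
  have hX : 0 ≤ X := by positivity
  have hY : 0 ≤ Y := by positivity
  have hsq : (t * a + s * b) * (s * a + t * b) = X ^ 2 + Y ^ 2 := by
    rw [mul_pow, mul_pow, sq_sqrt (mul_nonneg hs ht), sq_abs, sq_sqrt (mul_nonneg ha hb)]
    ring
  rw [hsq]
  exact ⟨(le_sqrt hX (by positivity)).2 (by nlinarith),
    (sqrt_le_left (by positivity)).2 (by nlinarith)⟩

def binomMass (n : ℕ) (p : ℝ) (i : ℕ) : ℝ := n.choose i * p ^ i * (1 - p) ^ (n - i)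

section Binomial

variable {p : ℝ} {n i : ℕ}

lemma sum_binomMass (n : ℕ) (p : ℝ) : ∑ i : Fin (n + 1), binomMass n p i = 1 := by
  rw [Fin.sum_univ_eq_sum_range (binomMass n p)]
  calc ∑ m ∈ range (n + 1), binomMass n p m
      = ∑ m ∈ range (n + 1), p ^ m * (1 - p) ^ (n - m) * n.choose m :=
        sum_congr rfl fun m _ => by unfold binomMass; ring
    _ = 1 := by rw [← add_pow, add_sub_cancel, one_pow]

lemma binomMass_nonneg (hp0 : 0 ≤ p) (hp1 : p ≤ 1) : 0 ≤ binomMass n p i := by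
  have : 0 ≤ 1 - p := sub_nonneg.2 hp1
  unfold binomMass
  positivity

lemma binomMass_pos (hp0 : 0 < p) (hp1 : p < 1) (hi : i ≤ n) : 0 < binomMass n p i := by
  have : (0 : ℝ) < n.choose i := by exact_mod_cast Nat.choose_pos hi
  have : 0 < 1 - p := by linarith
  unfold binomMass
  positivity

lemma binomMass_sub (p : ℝ) (hi : i ≤ n) : binomMass n p (n - i) = binomMass n (1 - p) i := by
  unfold binomMass
  rw [Nat.choose_symm hi, Nat.sub_sub_self hi, sub_sub_cancel]
  ring

lemma sqrt_binomMass_mul_binomMass_one_sub (hp0 : 0 ≤ p) (hp1 : p ≤ 1) (hi : i ≤ n) :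
    √(binomMass n p i * binomMass n (1 - p) i) = n.choose i * √(p * (1 - p)) ^ n := by
  have hsq :
      binomMass n p i * binomMass n (1 - p) i = (n.choose i * √(p * (1 - p)) ^ n) ^ 2 := by
    rw [mul_pow, ← pow_mul, mul_comm n, pow_mul, sq_sqrt (by nlinarith), binomMass, binomMass,
      sub_sub_cancel, ← Nat.add_sub_cancel' hi, mul_pow, pow_add, pow_add]
    simp only [Nat.add_sub_cancel_left]
    ring
  rw [hsq, sqrt_sq (by positivity)]

lemma sum_choose_fin (n : ℕ) : ∑ i : Fin (n + 1), (n.choose i : ℝ) = 2 ^ n := by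
  rw [Fin.sum_univ_eq_sum_range (fun i => (n.choose i : ℝ)), ← Nat.cast_sum,
    Nat.sum_range_choose]
  push_cast
  rfl

end Binomial

lemma two_sqrt_mul_one_sub_lt_one {p : ℝ} (hp : p ≠ 1 / 2) : 2 * √(p * (1 - p)) < 1 := by
  have hne : 1 - 2 * p ≠ 0 := fun h => hp (by linarith)
  have hsq : 0 < (1 - 2 * p) ^ 2 := by positivity
  have : √(p * (1 - p)) < 1 / 2 := (sqrt_lt' (by norm_num)).2 (by nlinarith)
  linarith

section Mixture

variable {p : ℝ} {n : ℕ}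

lemma Pmix0_succ (p : ℝ) (i : Fin (n + 1)) :
    Pmix0 (n + 1) p i = (1 - p) * binomMass n p i + p * binomMass n (1 - p) i := by
  have hi : n + 1 - i = n - i + 1 := by omega
  rw [Pmix0, Nat.add_sub_cancel, hi, binomMass, binomMass, sub_sub_cancel]
  ring

lemma Pmix1_succ (p : ℝ) (i : Fin (n + 1)) :
    Pmix1 (n + 1) p i = p * binomMass n p i + (1 - p) * binomMass n (1 - p) i := by
  have hi : n + 1 - i - 1 = n - i := by omega
  rw [Pmix1, Nat.add_sub_cancel, hi, binomMass, binomMass, sub_sub_cancel]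
  ring

lemma Pmix0_succ_rev (p : ℝ) (i : Fin (n + 1)) : Pmix0 (n + 1) p i.rev = Pmix1 (n + 1) p i := by
  have hi : (i : ℕ) ≤ n := Fin.is_le i
  have hrev : (i.rev : ℕ) = n - i := by rw [Fin.val_rev]; omega
  rw [Pmix0_succ, Pmix1_succ, hrev, binomMass_sub p hi, binomMass_sub (1 - p) hi, sub_sub_cancel]
  ring

lemma Pmix1_succ_rev (p : ℝ) (i : Fin (n + 1)) : Pmix1 (n + 1) p i.rev = Pmix0 (n + 1) p i := by
  rw [← Pmix0_succ_rev, Fin.rev_rev]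

lemma Pmix0_succ_pos (hp0 : 0 < p) (hp1 : p < 1) (i : Fin (n + 1)) : 0 < Pmix0 (n + 1) p i := by
  rw [Pmix0_succ]
  have := binomMass_pos hp0 hp1 (Fin.is_le i)
  have := binomMass_pos (sub_pos.2 hp1) (sub_lt_self 1 hp0) (Fin.is_le i)
  have : 0 < 1 - p := sub_pos.2 hp1
  positivity

lemma Pmix1_succ_pos (hp0 : 0 < p) (hp1 : p < 1) (i : Fin (n + 1)) : 0 < Pmix1 (n + 1) p i := by
  rw [← Pmix0_succ_rev]
  exact Pmix0_succ_pos hp0 hp1 _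

lemma chernoffInfo_Pmix_succ (hp0 : 0 < p) (hp1 : p < 1) (n : ℕ) :
    chernoffInfo (Pmix0 (n + 1) p) (Pmix1 (n + 1) p)
      = -log (bhattacharyya (Pmix0 (n + 1) p) (Pmix1 (n + 1) p)) :=
  chernoffInfo_eq_neg_log_bhattacharyya (Pmix0_succ_pos hp0 hp1) (Pmix1_succ_pos hp0 hp1)
    Fin.revPerm (Pmix0_succ_rev p) (Pmix1_succ_rev p)


lemma bhattacharyya_Pmix_succ_mem_Icc (hp0 : 0 ≤ p) (hp1 : p ≤ 1) (n : ℕ) :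
    bhattacharyya (Pmix0 (n + 1) p) (Pmix1 (n + 1) p)
      ∈ Set.Icc (2 * √(p * (1 - p)))
        (2 * √(p * (1 - p)) + |1 - 2 * p| * (2 * √(p * (1 - p))) ^ n) := by
  set q := √(p * (1 - p))
  have hterm (i : Fin (n + 1)) : √(Pmix0 (n + 1) p i * Pmix1 (n + 1) p i)
      ∈ Set.Icc (q * (binomMass n p i + binomMass n (1 - p) i))
        (q * (binomMass n p i + binomMass n (1 - p) i) + |1 - 2 * p| * (n.choose i * q ^ n)) := by
    rw [Pmix0_succ, Pmix1_succ, ← sqrt_binomMass_mul_binomMass_one_sub hp0 hp1 (Fin.is_le i),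
      show 1 - 2 * p = 1 - p - p by ring]
    exact sqrt_swapped_mixture_mul_mem_Icc hp0 (sub_nonneg.2 hp1)
      (binomMass_nonneg hp0 hp1) (binomMass_nonneg (sub_nonneg.2 hp1) (sub_le_self 1 hp0))
  have hmain : ∑ i : Fin (n + 1), q * (binomMass n p i + binomMass n (1 - p) i) = 2 * q := by
    rw [← mul_sum, sum_add_distrib, sum_binomMass, sum_binomMass]
    ring
  have herr :
      ∑ i : Fin (n + 1), |1 - 2 * p| * (n.choose i * q ^ n) = |1 - 2 * p| * (2 * q) ^ n := by
    rw [← mul_sum, ← sum_mul, sum_choose_fin, mul_pow]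
  constructor
  · exact hmain ▸ sum_le_sum fun i _ => (hterm i).1
  · calc bhattacharyya (Pmix0 (n + 1) p) (Pmix1 (n + 1) p)
        ≤ ∑ i : Fin (n + 1), (q * (binomMass n p i + binomMass n (1 - p) i)
            + |1 - 2 * p| * (n.choose i * q ^ n)) := sum_le_sum fun i _ => (hterm i).2
      _ = 2 * q + |1 - 2 * p| * (2 * q) ^ n := by rw [sum_add_distrib, hmain, herr]

lemma tendsto_bhattacharyya_Pmix_succ (hp0 : 0 ≤ p) (hp1 : p ≤ 1) (hp : p ≠ 1 / 2) :
    Tendsto (fun n : ℕ => bhattacharyya (Pmix0 (n + 1) p) (Pmix1 (n + 1) p)) atTop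
      (nhds (2 * √(p * (1 - p)))) := by
  have hgeom : Tendsto
      (fun n : ℕ => 2 * √(p * (1 - p)) + |1 - 2 * p| * (2 * √(p * (1 - p))) ^ n) atTop
      (nhds (2 * √(p * (1 - p)))) := by
    simpa using tendsto_const_nhds.add ((tendsto_pow_atTop_nhds_zero_of_lt_one (by positivity)
      (two_sqrt_mul_one_sub_lt_one hp)).const_mul |1 - 2 * p|)
  exact tendsto_of_tendsto_of_tendsto_of_le_of_le tendsto_const_nhds hgeom
    (fun n => (bhattacharyya_Pmix_succ_mem_Icc hp0 hp1 n).1)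
    (fun n => (bhattacharyya_Pmix_succ_mem_Icc hp0 hp1 n).2)

end Mixture

lemma KLhalf_eq_neg_log {θ : ℝ} (h0 : 0 < θ) (h1 : θ < 1) :
    KLhalf θ = -log (2 * √(θ * (1 - θ))) := by
  have : 0 < 1 - θ := sub_pos.2 h1
  rw [KLhalf, log_div (by norm_num) h0.ne', log_div (by norm_num) this.ne',
    log_mul two_ne_zero (by positivity), log_sqrt (by positivity), log_mul h0.ne' this.ne',
    show (0.5 : ℝ) = 2⁻¹ by norm_num, log_inv]
  ring

/-- Fix any `0 < p < 1/2`. The Chernoff information between the two binomial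
mixtures `P₀` and `P₁` converges, as `L → ∞`, to `KL(0.5‖p)`. -/
theorem chernoff_mixture_tendsto_KLhalf (p : ℝ) (hp0 : 0 < p) (hp1 : p < 1/2) :
    Tendsto (fun L : ℕ => chernoffInfo (Pmix0 L p) (Pmix1 L p)) atTop (nhds (KLhalf p)) := by
  have hp_lt_one : p < 1 := by linarith
  rw [← tendsto_add_atTop_iff_nat 1, KLhalf_eq_neg_log hp0 hp_lt_one]
  have hlog := (continuousAt_log (by positivity)).tendsto.comp
    (tendsto_bhattacharyya_Pmix_succ hp0.le hp_lt_one.le hp1.ne)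
  exact hlog.neg.congr fun n => (chernoffInfo_Pmix_succ hp0 hp_lt_one n).symm
end
end

section
/- Fix an integer L ≥ 2 and 0 < p < 1/2. Let P_0 = (1−p)·Binomial(L−1, p) + p·Binomial(L−1, 1−p) and P_1 = p·Binomial(L−1, p) + (1−p)·Binomial(L−1, 1−p), so that P_0(i) = C(L−1, i)·(p^i(1−p)^{L−i} + (1−p)^i p^{L−i}) and P_1(i) = C(L−1, i)·(p^{i+1}(1−p)^{L−i−1} + (1−p)^{i+1} p^{L−i−1}) for 0 ≤ i ≤ L−1. Then the infimum defining the Chernoff information D(P_0,P_1) is attained at τ = 1/2, and D(P_0,P_1) = −log Σ_{i=0}^{L−1} C(L−1, i) · sqrt[ (p^i(1−p)^{L−i} + (1−p)^i p^{L−i}) · (p^{i+1}(1−p)^{L−i−1} + (1−p)^{i+1} p^{L−i−1}) ]. -/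
open Filter

noncomputable section
attribute [local instance] Classical.propDecidable

/-! The reversal `i ↦ L - 1 - i` exchanges `P₀` and `P₁`, so `g(τ) = Σ P₀^τ P₁^(1-τ)` satisfies
`g(1 - τ) = g(τ)`. Termwise AM-GM for `P₀^τ P₁^(1-τ)` and `P₀^(1-τ) P₁^τ`, whose product is `P₀ P₁`,
gives `g(1/2) ≤ (g(τ) + g(1 - τ)) / 2 = g(τ)`. -/

namespace Real

theorem sqrt_mul_le_rpow_mul_rpow_add_rpow_mul_rpow {x y : ℝ} (hx : 0 ≤ x) (hy : 0 ≤ y) (τ : ℝ) :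
    √(x * y) ≤ (x ^ τ * y ^ (1 - τ) + x ^ (1 - τ) * y ^ τ) / 2 := by
  set u := x ^ τ * y ^ (1 - τ)
  set v := x ^ (1 - τ) * y ^ τ
  have huv : u * v = x * y := by
    calc u * v = (x ^ τ * x ^ (1 - τ)) * (y ^ (1 - τ) * y ^ τ) := by ring
      _ = x * y := by
        rw [← rpow_add' hx (by norm_num), ← rpow_add' hy (by norm_num)]
        norm_num
  have hu : 0 ≤ u := by positivity
  have hv : 0 ≤ v := by positivity
  calc √(x * y) = u ^ (1 / 2 : ℝ) * v ^ (1 / 2 : ℝ) := by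
        rw [← huv, sqrt_eq_rpow, mul_rpow hu hv]
    _ ≤ 1 / 2 * u + 1 / 2 * v :=
        geom_mean_le_arith_mean2_weighted (by norm_num) (by norm_num) hu hv (by norm_num)
    _ = (u + v) / 2 := by ring

end Real

section Chernoff

variable {α : Type*} [Fintype α] {P₀ P₁ : α → ℝ}

theorem sum_rpow_mul_rpow_one_sub_half (h₀ : ∀ y, 0 ≤ P₀ y) (h₁ : ∀ y, 0 ≤ P₁ y) :
    ∑ y, P₀ y ^ (1 / 2 : ℝ) * P₁ y ^ (1 - 1 / 2 : ℝ) = ∑ y, √(P₀ y * P₁ y) := by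
  refine Finset.sum_congr rfl fun y _ => ?_
  rw [show (1 - 1 / 2 : ℝ) = 1 / 2 by norm_num, Real.sqrt_eq_rpow, Real.mul_rpow (h₀ y) (h₁ y)]

theorem sum_rpow_mul_rpow_one_sub_comm (e : α ≃ α) (he₀ : ∀ y, P₀ (e y) = P₁ y)
    (he₁ : ∀ y, P₁ (e y) = P₀ y) (τ : ℝ) :
    ∑ y, P₀ y ^ (1 - τ) * P₁ y ^ τ = ∑ y, P₀ y ^ τ * P₁ y ^ (1 - τ) := by
  refine Fintype.sum_equiv e _ _ fun y => ?_
  rw [he₀, he₁, mul_comm]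

theorem sum_sqrt_mul_le_sum_rpow_mul_rpow_one_sub (h₀ : ∀ y, 0 ≤ P₀ y) (h₁ : ∀ y, 0 ≤ P₁ y)
    (e : α ≃ α) (he₀ : ∀ y, P₀ (e y) = P₁ y) (he₁ : ∀ y, P₁ (e y) = P₀ y) (τ : ℝ) :
    ∑ y, √(P₀ y * P₁ y) ≤ ∑ y, P₀ y ^ τ * P₁ y ^ (1 - τ) := by
  calc ∑ y, √(P₀ y * P₁ y)
      ≤ ∑ y, (P₀ y ^ τ * P₁ y ^ (1 - τ) + P₀ y ^ (1 - τ) * P₁ y ^ τ) / 2 :=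
        Finset.sum_le_sum fun y _ =>
          Real.sqrt_mul_le_rpow_mul_rpow_add_rpow_mul_rpow (h₀ y) (h₁ y) τ
    _ = (∑ y, P₀ y ^ τ * P₁ y ^ (1 - τ) + ∑ y, P₀ y ^ (1 - τ) * P₁ y ^ τ) / 2 := by
        rw [← Finset.sum_add_distrib, Finset.sum_div]
    _ = ∑ y, P₀ y ^ τ * P₁ y ^ (1 - τ) := by
        rw [sum_rpow_mul_rpow_one_sub_comm e he₀ he₁]; ring

theorem isLeast_log_sum_rpow_mul_rpow_one_sub_half [Nonempty α] (h₀ : ∀ y, 0 < P₀ y)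
    (h₁ : ∀ y, 0 < P₁ y) (e : α ≃ α) (he₀ : ∀ y, P₀ (e y) = P₁ y)
    (he₁ : ∀ y, P₁ (e y) = P₀ y) :
    IsLeast ((fun τ : ℝ => Real.log (∑ y, P₀ y ^ τ * P₁ y ^ (1 - τ))) '' Set.Icc 0 1)
      ((fun τ : ℝ => Real.log (∑ y, P₀ y ^ τ * P₁ y ^ (1 - τ))) (1 / 2)) := by
  refine ⟨⟨1 / 2, by norm_num, rfl⟩, ?_⟩
  rintro _ ⟨τ, -, rfl⟩
  have hpos : 0 < ∑ y, √(P₀ y * P₁ y) :=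
    Finset.sum_pos (fun y _ => Real.sqrt_pos.2 (mul_pos (h₀ y) (h₁ y))) Finset.univ_nonempty
  dsimp only
  rw [sum_rpow_mul_rpow_one_sub_half (fun y => (h₀ y).le) (fun y => (h₁ y).le)]
  exact Real.log_le_log hpos <| sum_sqrt_mul_le_sum_rpow_mul_rpow_one_sub
    (fun y => (h₀ y).le) (fun y => (h₁ y).le) e he₀ he₁ τ

theorem chernoffInfo_eq_neg_log_sum_sqrt_mul [Nonempty α] (h₀ : ∀ y, 0 < P₀ y)
    (h₁ : ∀ y, 0 < P₁ y) (e : α ≃ α) (he₀ : ∀ y, P₀ (e y) = P₁ y)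
    (he₁ : ∀ y, P₁ (e y) = P₀ y) :
    chernoffInfo P₀ P₁ = -Real.log (∑ y, √(P₀ y * P₁ y)) := by
  rw [chernoffInfo, (isLeast_log_sum_rpow_mul_rpow_one_sub_half h₀ h₁ e he₀ he₁).csInf_eq]
  dsimp only
  rw [sum_rpow_mul_rpow_one_sub_half (fun y => (h₀ y).le) (fun y => (h₁ y).le)]

end Chernoff

section BinomialMixture

variable {L : ℕ} {p : ℝ}

theorem pmix0_pos (hp0 : 0 < p) (hp1 : p < 1) (i : Fin L) : 0 < Pmix0 L p i := by
  have : 0 < 1 - p := by linarith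
  have : 0 < (L - 1).choose i := Nat.choose_pos (by omega)
  unfold Pmix0; positivity

theorem pmix1_pos (hp0 : 0 < p) (hp1 : p < 1) (i : Fin L) : 0 < Pmix1 L p i := by
  have : 0 < 1 - p := by linarith
  have : 0 < (L - 1).choose i := Nat.choose_pos (by omega)
  unfold Pmix1; positivity

theorem pmix0_rev (i : Fin L) : Pmix0 L p i.rev = Pmix1 L p i := by
  have hi := i.isLt
  simp only [Pmix0, Pmix1, Fin.val_rev]
  rw [show L - (L - (i + 1)) = i + 1 by omega, show L - (i + 1) = L - 1 - i by omega,
    Nat.choose_symm (by omega), Nat.sub_right_comm L (i : ℕ) 1]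
  ring

theorem pmix1_rev (i : Fin L) : Pmix1 L p i.rev = Pmix0 L p i := by
  rw [← pmix0_rev, Fin.rev_rev]

theorem sqrt_pmix0_mul_pmix1 (i : Fin L) :
    √(Pmix0 L p i * Pmix1 L p i) = ((L - 1).choose i : ℝ) *
      √((p ^ (i : ℕ) * (1 - p) ^ (L - (i : ℕ)) + (1 - p) ^ (i : ℕ) * p ^ (L - (i : ℕ))) *
        (p ^ ((i : ℕ) + 1) * (1 - p) ^ (L - (i : ℕ) - 1) +
          (1 - p) ^ ((i : ℕ) + 1) * p ^ (L - (i : ℕ) - 1))) := by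
  rw [Pmix0, Pmix1, mul_mul_mul_comm, ← sq, Real.sqrt_mul (sq_nonneg _),
    Real.sqrt_sq (Nat.cast_nonneg _)]

end BinomialMixture

/-- For the binomial mixtures `P₀`, `P₁`, the infimum defining the Chernoff
information is attained at `τ = 1/2`, and `D(P₀,P₁)` equals the explicit closed form
`−log Σᵢ C(L−1,i)·√((pⁱ(1−p)^{L−i} + (1−p)ⁱ p^{L−i})·(p^{i+1}(1−p)^{L−i−1} + (1−p)^{i+1} p^{L−i−1}))`. -/
theorem chernoff_mixture_closed_form (L : ℕ) (hL : 2 ≤ L) (p : ℝ)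
    (hp0 : 0 < p) (hp1 : p < 1/2) :
    IsLeast
      ((fun τ : ℝ => Real.log (∑ i, Pmix0 L p i ^ τ * Pmix1 L p i ^ (1 - τ))) ''
        Set.Icc 0 1)
      ((fun τ : ℝ => Real.log (∑ i, Pmix0 L p i ^ τ * Pmix1 L p i ^ (1 - τ))) (1/2)) ∧
    chernoffInfo (Pmix0 L p) (Pmix1 L p) =
      - Real.log (∑ i : Fin L, ((L-1).choose i : ℝ) *
          Real.sqrt ((p ^ (i:ℕ) * (1-p) ^ (L - (i:ℕ)) + (1-p) ^ (i:ℕ) * p ^ (L - (i:ℕ))) *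
            (p ^ ((i:ℕ)+1) * (1-p) ^ (L - (i:ℕ) - 1) +
              (1-p) ^ ((i:ℕ)+1) * p ^ (L - (i:ℕ) - 1)))) := by
  have : Nonempty (Fin L) := ⟨⟨0, by omega⟩⟩
  have hp_lt_one : p < 1 := by linarith
  have h₀ := pmix0_pos (L := L) hp0 hp_lt_one
  have h₁ := pmix1_pos (L := L) hp0 hp_lt_one
  refine ⟨isLeast_log_sum_rpow_mul_rpow_one_sub_half h₀ h₁ Fin.revPerm pmix0_rev pmix1_rev, ?_⟩
  rw [chernoffInfo_eq_neg_log_sum_sqrt_mul h₀ h₁ Fin.revPerm pmix0_rev pmix1_rev]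
  simp only [sqrt_pmix0_mul_pmix1]
end
end

section
/- Fix 0 < p < 1/2 and let L = 2. With P_0 = (1−p)·Binomial(1, p) + p·Binomial(1, 1−p) and P_1 = p·Binomial(1, p) + (1−p)·Binomial(1, 1−p), the Chernoff information satisfies D(P_0,P_1) = −log(2·sqrt(θ(1−θ))) = KL(0.5‖θ), where θ := 2p(1−p). -/
open Filter

noncomputable section
attribute [local instance] Classical.propDecidable

/-!
For `L = 2` the mixtures are the swapped pair `P₀ = (1 - θ, θ)`, `P₁ = (θ, 1 - θ)`. The two terms
of `Σ P₀^τ P₁^(1-τ)` then have product `θ(1 - θ)` whatever `τ` is, so by AM-GM the sum is at least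
`2√(θ(1 - θ))`, with equality at `τ = 1/2`.
-/

theorem two_sqrt_mul_le_rpow_mul_add {a b : ℝ} (ha : 0 < a) (hb : 0 < b) (τ : ℝ) :
    2 * √(a * b) ≤ a ^ τ * b ^ (1 - τ) + b ^ τ * a ^ (1 - τ) := by
  set x := a ^ τ * b ^ (1 - τ)
  set y := b ^ τ * a ^ (1 - τ)
  have hx : 0 ≤ x := by positivity
  have hy : 0 ≤ y := by positivity
  have hxy : x * y = a * b := by
    calc x * y = a ^ τ * a ^ (1 - τ) * (b ^ τ * b ^ (1 - τ)) := by ring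
      _ = a * b := by rw [← Real.rpow_add ha, ← Real.rpow_add hb, add_sub_cancel, Real.rpow_one,
        Real.rpow_one]
  rw [← hxy, Real.sqrt_mul hx]
  nlinarith [sq_nonneg (√x - √y), Real.sq_sqrt hx, Real.sq_sqrt hy]

theorem rpow_half_mul_add_eq_two_sqrt_mul {a b : ℝ} (ha : 0 ≤ a) :
    a ^ (1 / 2 : ℝ) * b ^ (1 - 1 / 2 : ℝ) + b ^ (1 / 2 : ℝ) * a ^ (1 - 1 / 2 : ℝ) =
      2 * √(a * b) := by
  rw [show (1 - 1 / 2 : ℝ) = 1 / 2 by norm_num, Real.sqrt_mul ha, Real.sqrt_eq_rpow,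
    Real.sqrt_eq_rpow]
  ring

theorem chernoffInfo_swap {a b : ℝ} (ha : 0 < a) (hb : 0 < b) :
    chernoffInfo ![a, b] ![b, a] = -Real.log (2 * √(a * b)) := by
  have hM : 0 < 2 * √(a * b) := by positivity
  have hleast : IsLeast ((fun τ : ℝ => Real.log (a ^ τ * b ^ (1 - τ) + b ^ τ * a ^ (1 - τ))) ''
      Set.Icc 0 1) (Real.log (2 * √(a * b))) := by
    refine ⟨⟨1 / 2, ⟨by norm_num, by norm_num⟩, ?_⟩, ?_⟩
    · exact congrArg Real.log (rpow_half_mul_add_eq_two_sqrt_mul ha.le)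
    · rintro _ ⟨τ, -, rfl⟩
      exact Real.log_le_log hM (two_sqrt_mul_le_rpow_mul_add ha hb τ)
  simp only [chernoffInfo, Fin.sum_univ_two, Matrix.cons_val_zero, Matrix.cons_val_one]
  rw [hleast.csInf_eq]

theorem neg_log_two_sqrt_eq_KLhalf {θ : ℝ} (hθ0 : 0 < θ) (hθ1 : θ < 1) :
    -Real.log (2 * √(θ * (1 - θ))) = KLhalf θ := by
  have h1θ : 0 < 1 - θ := by linarith
  rw [KLhalf, Real.log_mul two_ne_zero (by positivity), Real.log_sqrt (by positivity),
    Real.log_mul hθ0.ne' h1θ.ne', Real.log_div (by norm_num) hθ0.ne',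
    Real.log_div (by norm_num) h1θ.ne', show (0.5 : ℝ) = 2⁻¹ by norm_num, Real.log_inv]
  ring

theorem Pmix0_two (p : ℝ) : Pmix0 2 p = ![1 - 2 * p * (1 - p), 2 * p * (1 - p)] := by
  ext i
  fin_cases i <;> simp [Pmix0] <;> ring

theorem Pmix1_two (p : ℝ) : Pmix1 2 p = ![2 * p * (1 - p), 1 - 2 * p * (1 - p)] := by
  ext i
  fin_cases i <;> simp [Pmix1] <;> ring

/-- For `L = 2` and `0 < p < 1/2`, with `θ := 2p(1−p)`, the Chernoff
information between the mixtures `P₀`, `P₁` equals `−log(2√(θ(1−θ))) = KL(0.5‖θ)`. -/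
theorem chernoff_mixture_L2 (p : ℝ) (hp0 : 0 < p) (hp1 : p < 1/2) :
    chernoffInfo (Pmix0 2 p) (Pmix1 2 p) =
        - Real.log (2 * Real.sqrt ((2*p*(1-p)) * (1 - 2*p*(1-p)))) ∧
    chernoffInfo (Pmix0 2 p) (Pmix1 2 p) = KLhalf (2*p*(1-p)) := by
  have hθ0 : 0 < 2 * p * (1 - p) := by nlinarith
  have hθ1 : 2 * p * (1 - p) < 1 := by nlinarith
  have hD : chernoffInfo (Pmix0 2 p) (Pmix1 2 p) =
      -Real.log (2 * √((2 * p * (1 - p)) * (1 - 2 * p * (1 - p)))) := by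
    rw [Pmix0_two, Pmix1_two, chernoffInfo_swap (by linarith) hθ0, mul_comm (1 - _)]
  exact ⟨hD, hD.trans (neg_log_two_sqrt_eq_KLhalf hθ0 hθ1)⟩
end
end

section
/- Fix any ε > 0. Let P_0 and P_1 be two probability distributions on a fixed finite alphabet with Chernoff information D* = D(P_0,P_1) > 0 and max_z P_1(z)/P_0(z) < ∞. Let N_z ~ Poisson(N) and, conditional on N_z, let Z = (Z_1,…,Z_{N_z}) be i.i.d. samples. Then the probability under P_0 that P_1(Z)/P_0(Z) ≥ 1 is at most exp{−N·(1 − e^{−D*})}; moreover, for all sufficiently large N, this probability is at least exp{−(1+ε)·N·(1 − e^{−D*})}. -/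
/-!
Chernoff's bound `P₀{P₁(Z)/P₀(Z) ≥ 1} ≤ (∑ P₀^τ P₁^{1-τ})^k`, optimised over `τ ∈ [0,1]`, bounds
the error of a sample of size `k` by `e^{-k D*}`, and averaging `e^{-k D*}` over `k ~ Poisson(N)`
gives exactly `exp(-N(1 - e^{-D*}))`.

For the lower bound, tilt `P₁` to `q ∝ P₀^τ P₁^{1-τ}`, choosing `τ < 1` so that the log-likelihood
ratio has a positive `q`-mean `μ` with `(1 - τ) μ` small. By Chebyshev, `q^k` gives mass `≥ 1/2` to
`{0 ≤ ∑ llr ≤ 2kμ}`, and on that set `P₀^k ≥ (∑ P₀^τ P₁^{1-τ})^k e^{-2k(1-τ)μ} q^k`; hence the error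
of a sample of size `k` is eventually at least `ρ^k` for every `ρ < e^{-D*}`. Under the Poisson
average, the finitely many `k` before this bound applies have weight `o(e^{-N(1-ρ)})`.
-/

open Filter

noncomputable section
attribute [local instance] Classical.propDecidable

/-- The `P₀`-probability that the likelihood ratio of `k` i.i.d. samples favors `P₁`,
i.e. `P₀{P₁(Z)/P₀(Z) ≥ 1}` for `Z = (Z₁,…,Z_k)` i.i.d. -/
def lrErrP {α : Type*} [Fintype α] (P0 P1 : α → ℝ) (k : ℕ) : ℝ :=
  ∑ z ∈ Finset.univ.filter (fun z : Fin k → α => ∏ i, P0 (z i) ≤ ∏ i, P1 (z i)),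
    ∏ i, P0 (z i)

open Finset Real Topology

namespace ChernoffPoisson

section ProductMoments

variable {α : Type*} [Fintype α] {q f : α → ℝ}

lemma sum_pi_succ {k : ℕ} (F : (Fin (k + 1) → α) → ℝ) :
    ∑ z, F z = ∑ a, ∑ z : Fin k → α, F (Fin.cons a z) := by
  rw [← (Fin.consEquiv fun _ => α).sum_comp, Fintype.sum_prod_type]
  rfl

lemma sum_pi_prod_eq_one (hq : ∑ y, q y = 1) (k : ℕ) :
    ∑ z : Fin k → α, ∏ i, q (z i) = 1 := by
  rw [← Fintype.sum_pow, hq, one_pow]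

lemma sum_pi_prod_mul_sum_eq_zero (hq : ∑ y, q y = 1) (hf : ∑ y, q y * f y = 0) (k : ℕ) :
    ∑ z : Fin k → α, (∏ i, q (z i)) * ∑ i, f (z i) = 0 := by
  induction k with
  | zero => simp
  | succ k ih =>
    simp only [sum_pi_succ, Fin.prod_univ_succ, Fin.sum_univ_succ, Fin.cons_zero, Fin.cons_succ]
    calc _ = ∑ a, (q a * f a * ∑ z : Fin k → α, ∏ i, q (z i)
              + q a * ∑ z : Fin k → α, (∏ i, q (z i)) * ∑ i, f (z i)) := by
            refine sum_congr rfl fun a _ => ?_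
            rw [mul_sum, mul_sum, ← sum_add_distrib]
            exact sum_congr rfl fun z _ => by ring
      _ = 0 := by simp [sum_pi_prod_eq_one hq, ih, hf]

lemma sum_pi_prod_mul_sum_sq (hq : ∑ y, q y = 1) (hf : ∑ y, q y * f y = 0) (k : ℕ) :
    ∑ z : Fin k → α, (∏ i, q (z i)) * (∑ i, f (z i)) ^ 2 = k * ∑ y, q y * f y ^ 2 := by
  induction k with
  | zero => simp
  | succ k ih =>
    simp only [sum_pi_succ, Fin.prod_univ_succ, Fin.sum_univ_succ, Fin.cons_zero, Fin.cons_succ]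
    calc _ = ∑ a, (q a * f a ^ 2 * ∑ z : Fin k → α, ∏ i, q (z i)
              + 2 * (q a * f a) * ∑ z : Fin k → α, (∏ i, q (z i)) * ∑ i, f (z i)
              + q a * ∑ z : Fin k → α, (∏ i, q (z i)) * (∑ i, f (z i)) ^ 2) := by
            refine sum_congr rfl fun a _ => ?_
            rw [mul_sum, mul_sum, mul_sum, ← sum_add_distrib, ← sum_add_distrib]
            exact sum_congr rfl fun z _ => by ring
      _ = _ := by
            simp only [sum_pi_prod_eq_one hq, sum_pi_prod_mul_sum_eq_zero hq hf, ih]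
            simp only [mul_one, mul_zero, add_zero, sum_add_distrib, ← sum_mul, hq]
            push_cast
            ring

lemma sum_pi_prod_filter_le_abs_le (hq0 : ∀ y, 0 ≤ q y) (hq : ∑ y, q y = 1)
    (hf : ∑ y, q y * f y = 0) (k : ℕ) {a : ℝ} (ha : 0 < a) :
    ∑ z ∈ univ.filter (fun z : Fin k → α => a ≤ |∑ i, f (z i)|), ∏ i, q (z i)
      ≤ k * (∑ y, q y * f y ^ 2) / a ^ 2 := by
  have hprod : ∀ z : Fin k → α, 0 ≤ ∏ i, q (z i) := fun z => prod_nonneg fun i _ => hq0 _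
  calc _ ≤ ∑ z ∈ univ.filter (fun z : Fin k → α => a ≤ |∑ i, f (z i)|),
          (∏ i, q (z i)) * ((∑ i, f (z i)) ^ 2 / a ^ 2) := by
        refine sum_le_sum fun z hz => le_mul_of_one_le_right (hprod z) ?_
        rw [one_le_div (by positivity), ← sq_abs (∑ i, f (z i))]
        exact pow_le_pow_left₀ ha.le (mem_filter.1 hz).2 2
    _ ≤ ∑ z : Fin k → α, (∏ i, q (z i)) * ((∑ i, f (z i)) ^ 2 / a ^ 2) :=
        sum_le_sum_of_subset_of_nonneg (filter_subset _ _) fun z _ _ =>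
          mul_nonneg (hprod z) (by positivity)
    _ = _ := by simp only [← mul_div_assoc, ← sum_div, sum_pi_prod_mul_sum_sq hq hf]

end ProductMoments

section ChangeOfMeasure

variable {α : Type*} {p q ℓ : α → ℝ} {c θ μ : ℝ}

lemma prod_eq_pow_mul_prod_mul_exp (hpq : ∀ y, 0 < q y → p y = c * q y * exp (-(θ * ℓ y)))
    {k : ℕ} {z : Fin k → α} (hz : ∀ i, 0 < q (z i)) :
    ∏ i, p (z i) = c ^ k * (∏ i, q (z i)) * exp (-(θ * ∑ i, ℓ (z i))) := by
  rw [prod_congr rfl fun i _ => hpq _ (hz i), prod_mul_distrib, prod_mul_distrib, prod_const,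
    card_univ, Fintype.card_fin, ← exp_sum, mul_sum, ← sum_neg_distrib]

lemma one_half_le_sum_pi_prod_filter_abs_lt [Fintype α] (hq0 : ∀ y, 0 ≤ q y) (hq : ∑ y, q y = 1)
    (hμ : ∑ y, q y * ℓ y = μ) (hμ0 : 0 < μ) {k : ℕ} (hk : 0 < k)
    (hkV : 2 * ∑ y, q y * (ℓ y - μ) ^ 2 ≤ k * μ ^ 2) :
    1 / 2 ≤ ∑ z ∈ univ.filter (fun z : Fin k → α => |∑ i, (ℓ (z i) - μ)| < k * μ),
      ∏ i, q (z i) := by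
  have hf : ∑ y, q y * (ℓ y - μ) = 0 := by
    simp only [mul_sub, sum_sub_distrib, hμ, ← sum_mul, hq]; ring
  have hcheb := sum_pi_prod_filter_le_abs_le hq0 hq hf k (a := k * μ) (by positivity)
  have hsplit := sum_filter_add_sum_filter_not univ
    (fun z : Fin k → α => |∑ i, (ℓ (z i) - μ)| < k * μ) fun z => ∏ i, q (z i)
  simp only [not_lt, sum_pi_prod_eq_one hq] at hsplit
  have hV : (k : ℝ) * (∑ y, q y * (ℓ y - μ) ^ 2) / (k * μ) ^ 2 ≤ 1 / 2 := by
    rw [div_le_iff₀ (by positivity)]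
    nlinarith
  linarith

lemma pow_mul_prod_le_prod (hc : 0 ≤ c) (hθ : 0 ≤ θ)
    (hpq : ∀ y, 0 < q y → p y = c * q y * exp (-(θ * ℓ y))) {k : ℕ} {z : Fin k → α}
    (hzq : ∀ i, 0 < q (z i)) (hz : ∑ i, ℓ (z i) ≤ 2 * k * μ) :
    (c * exp (-(2 * θ * μ))) ^ k * ∏ i, q (z i) ≤ ∏ i, p (z i) := by
  rw [prod_eq_pow_mul_prod_mul_exp hpq hzq, mul_pow, ← exp_nat_mul, mul_right_comm]
  have hq : 0 ≤ ∏ i, q (z i) := prod_nonneg fun i _ => (hzq i).le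
  gcongr
  nlinarith

/-- On the tuples whose `ℓ`-sum lies within `k μ` of its `q`-mean `k μ` the density `∏ p / ∏ q` is
at least `(c e^{-2θμ})^k`, and by Chebyshev these tuples carry `q`-mass at least `1/2`. -/
lemma pow_div_two_le_sum_pi_prod_filter [Fintype α] (hq0 : ∀ y, 0 ≤ q y) (hq : ∑ y, q y = 1)
    (hc : 0 ≤ c) (hθ : 0 ≤ θ) (hpq : ∀ y, 0 < q y → p y = c * q y * exp (-(θ * ℓ y)))
    (hμ : ∑ y, q y * ℓ y = μ) (hμ0 : 0 < μ) {k : ℕ} (hk : 0 < k)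
    (hkV : 2 * ∑ y, q y * (ℓ y - μ) ^ 2 ≤ k * μ ^ 2) :
    (c * exp (-(2 * θ * μ))) ^ k / 2 ≤
      ∑ z ∈ univ.filter (fun z : Fin k → α => (∀ i, 0 < q (z i)) ∧ 0 ≤ ∑ i, ℓ (z i)),
        ∏ i, p (z i) := by
  set G := univ.filter (fun z : Fin k → α => |∑ i, (ℓ (z i) - μ)| < k * μ)
  set C := (c * exp (-(2 * θ * μ))) ^ k
  have hC : 0 ≤ C := by positivity
  have hG : ∀ z ∈ G, 0 ≤ ∑ i, ℓ (z i) ∧ ∑ i, ℓ (z i) ≤ 2 * k * μ := by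
    intro z hz
    have hbound := abs_lt.1 (mem_filter.1 hz).2
    simp only [sum_sub_distrib, sum_const, card_univ, Fintype.card_fin, nsmul_eq_mul] at hbound
    constructor <;> linarith [hbound.1, hbound.2]
  calc C / 2 ≤ C * ∑ z ∈ G, ∏ i, q (z i) := by
        rw [div_eq_mul_one_div]
        exact mul_le_mul_of_nonneg_left
          (one_half_le_sum_pi_prod_filter_abs_lt hq0 hq hμ hμ0 hk hkV) hC
    _ = ∑ z ∈ G.filter (fun z => ∀ i, 0 < q (z i)), C * ∏ i, q (z i) := by
        rw [mul_sum]
        refine (sum_filter_of_ne fun z _ hz i => ?_).symm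
        exact (hq0 _).lt_of_ne' (prod_ne_zero_iff.1 (right_ne_zero_of_mul hz) i (mem_univ i))
    _ ≤ ∑ z ∈ G.filter (fun z => ∀ i, 0 < q (z i)), ∏ i, p (z i) := sum_le_sum fun z hz =>
        pow_mul_prod_le_prod hc hθ hpq (mem_filter.1 hz).2 (hG z (mem_filter.1 hz).1).2
    _ ≤ _ := by
        refine sum_le_sum_of_subset_of_nonneg (fun z hz => ?_) fun z hz _ => ?_
        · simp only [mem_filter, mem_univ, true_and] at hz ⊢
          exact ⟨hz.2, (hG z (by simpa [G] using hz.1)).1⟩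
        · rw [prod_eq_pow_mul_prod_mul_exp hpq (mem_filter.1 hz).2.1]
          exact mul_nonneg (mul_nonneg (pow_nonneg hc k) (prod_nonneg fun i _ => hq0 _))
            (exp_pos _).le

end ChangeOfMeasure

lemma eventually_pow_le_pow_div_two {ρ x : ℝ} (hρ : 0 ≤ ρ) (hρx : ρ < x) :
    ∀ᶠ k : ℕ in atTop, ρ ^ k ≤ x ^ k / 2 := by
  have hx : 0 < x := hρ.trans_lt hρx
  filter_upwards [(tendsto_pow_atTop_nhds_zero_of_lt_one (div_nonneg hρ hx.le)
    ((div_lt_one hx).2 hρx)).eventually_le_const (by norm_num : (0 : ℝ) < 1 / 2)] with k hk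
  rw [div_pow, div_le_iff₀ (by positivity)] at hk
  linarith

/-- `(1 - τ) g'(τ) / g(τ)` vanishes at `τ = 1` and, by the mean value theorem, is negative somewhere
in `(0, τ₀)`; the intermediate value theorem then yields every small negative value. -/
lemma exists_deriv_neg_and_mul_deriv_div_lt {g : ℝ → ℝ} (hg : ContDiff ℝ 1 g)
    (hpos : ∀ x, 0 < g x) {τ₀ : ℝ} (hτ₀ : τ₀ ∈ Set.Ioo 0 1) (hlt : g τ₀ < g 0) {γ : ℝ}
    (hγ : 0 < γ) :
    ∃ τ ∈ Set.Ioo (0 : ℝ) 1, deriv g τ < 0 ∧ -((1 - τ) * deriv g τ / g τ) < γ := by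
  set h := fun τ => -((1 - τ) * deriv g τ / g τ)
  have hcont : Continuous h :=
    ((continuous_const.sub continuous_id).mul (hg.continuous_deriv le_rfl)).div
      hg.continuous (fun x => (hpos x).ne') |>.neg
  obtain ⟨c, hc, hslope⟩ := exists_deriv_eq_slope g hτ₀.1 hg.continuous.continuousOn
    (hg.differentiable one_ne_zero).differentiableOn
  have hc1 : c < 1 := hc.2.trans hτ₀.2
  have hhc : 0 < h c := by
    have hdc : deriv g c < 0 := by
      rw [hslope]; exact div_neg_of_neg_of_pos (by linarith) (by linarith [hτ₀.1])
    simp only [h, neg_pos]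
    exact div_neg_of_neg_of_pos (mul_neg_of_pos_of_neg (by linarith) hdc) (hpos c)
  have hh1 : h 1 = 0 := by simp [h]
  set v := min (h c) γ / 2 with hv_def
  have hv : 0 < v := by positivity
  have hvc : v < h c := by linarith [min_le_left (h c) γ]
  obtain ⟨τ, hτ, hτv⟩ := intermediate_value_Icc' hc1.le hcont.continuousOn
    (show v ∈ Set.Icc (h 1) (h c) from ⟨hh1 ▸ hv.le, hvc.le⟩)
  have hτ1 : τ ≠ 1 := by rintro rfl; linarith
  have hτ1' : τ < 1 := hτ.2.lt_of_ne hτ1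
  refine ⟨τ, ⟨hc.1.trans_le hτ.1, hτ1'⟩, ?_, ?_⟩
  · have hhτ : 0 < h τ := hτv ▸ hv
    by_contra hd
    have := div_nonneg (mul_nonneg (sub_nonneg.2 hτ1'.le) (not_lt.1 hd)) (hpos τ).le
    simp only [h] at hhτ
    linarith
  · show h τ < γ
    linarith [min_le_right (h c) γ]

lemma le_rpow_mul_rpow {a b τ : ℝ} (ha : 0 ≤ a) (hab : a ≤ b) (hτ : τ ≤ 1) :
    a ≤ a ^ τ * b ^ (1 - τ) :=
  calc a = a ^ τ * a ^ (1 - τ) := by rw [← rpow_add' ha (by norm_num)]; simp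
    _ ≤ a ^ τ * b ^ (1 - τ) := by gcongr

section Chernoff

variable {α : Type*} [Fintype α] {P0 P1 : α → ℝ}

lemma lrErrP_nonneg (h00 : ∀ z, 0 ≤ P0 z) (k : ℕ) : 0 ≤ lrErrP P0 P1 k :=
  sum_nonneg fun z _ => prod_nonneg fun i _ => h00 (z i)

lemma lrErrP_le_sum_rpow_pow (h00 : ∀ z, 0 ≤ P0 z) (h10 : ∀ z, 0 ≤ P1 z) {τ : ℝ}
    (hτ : τ ≤ 1) (k : ℕ) :
    lrErrP P0 P1 k ≤ (∑ y, P0 y ^ τ * P1 y ^ (1 - τ)) ^ k := by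
  rw [Fintype.sum_pow, lrErrP]
  calc _ ≤ ∑ z ∈ univ.filter (fun z : Fin k → α => ∏ i, P0 (z i) ≤ ∏ i, P1 (z i)),
          ∏ i, P0 (z i) ^ τ * P1 (z i) ^ (1 - τ) := by
        refine sum_le_sum fun z hz => ?_
        rw [prod_mul_distrib, finsetProd_rpow _ _ (fun i _ => h00 _),
          finsetProd_rpow _ _ (fun i _ => h10 _)]
        exact le_rpow_mul_rpow (prod_nonneg fun i _ => h00 _) (mem_filter.1 hz).2 hτ
    _ ≤ _ := sum_le_sum_of_subset_of_nonneg (filter_subset _ _) fun z _ _ =>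
        prod_nonneg fun i _ => mul_nonneg (rpow_nonneg (h00 _) _) (rpow_nonneg (h10 _) _)

lemma lrErrP_le_exp_neg_chernoffInfo_pow (h00 : ∀ z, 0 ≤ P0 z) (h10 : ∀ z, 0 ≤ P1 z) (k : ℕ) :
    lrErrP P0 P1 k ≤ exp (-chernoffInfo P0 P1) ^ k := by
  rcases k.eq_zero_or_pos with rfl | hk
  · simpa using lrErrP_le_sum_rpow_pow h00 h10 (τ := 0) zero_le_one 0
  rcases (lrErrP_nonneg h00 k).eq_or_lt with h | hL
  · rw [← h]; positivity
  have hsInf : log (lrErrP P0 P1 k) / k ≤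
      sInf ((fun τ : ℝ => log (∑ y, P0 y ^ τ * P1 y ^ (1 - τ))) '' Set.Icc 0 1) := by
    refine le_csInf ⟨_, 0, ⟨le_rfl, zero_le_one⟩, rfl⟩ ?_
    rintro _ ⟨τ, hτ, rfl⟩
    rw [div_le_iff₀ (by positivity), mul_comm, ← log_pow]
    exact log_le_log hL (lrErrP_le_sum_rpow_pow h00 h10 hτ.2 k)
  rw [div_le_iff₀ (by positivity)] at hsInf
  rw [chernoffInfo, neg_neg, ← exp_nat_mul, ← exp_log hL]
  exact exp_le_exp.2 (by linarith)

lemma sum_rpow_zero (hs1 : ∑ z, P1 z = 1) : ∑ y, P0 y ^ (0 : ℝ) * P1 y ^ (1 - 0 : ℝ) = 1 := by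
  simpa using hs1

lemma sum_rpow_one (hs0 : ∑ z, P0 z = 1) : ∑ y, P0 y ^ (1 : ℝ) * P1 y ^ (1 - 1 : ℝ) = 1 := by
  simpa using hs0

lemma exists_sum_rpow_lt_one (hs0 : ∑ z, P0 z = 1) (hs1 : ∑ z, P1 z = 1)
    (hD : 0 < chernoffInfo P0 P1) :
    ∃ τ ∈ Set.Ioo (0 : ℝ) 1, ∑ y, P0 y ^ τ * P1 y ^ (1 - τ) < 1 := by
  rw [chernoffInfo, neg_pos] at hD
  obtain ⟨_, ⟨τ, hτ, rfl⟩, hlog⟩ := exists_lt_of_csInf_lt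
    ((Set.nonempty_Icc.2 zero_le_one).image _) hD
  have hlt : ∑ y, P0 y ^ τ * P1 y ^ (1 - τ) < 1 := by
    by_contra h
    exact (log_nonneg (not_lt.1 h)).not_gt hlog
  refine ⟨τ, ⟨hτ.1.lt_of_ne ?_, hτ.2.lt_of_ne ?_⟩, hlt⟩
  · rintro rfl; rw [sum_rpow_zero hs1] at hlt; exact hlt.false
  · rintro rfl; rw [sum_rpow_one hs0] at hlt; exact hlt.false

/-- `chernoffInfo` is a junk `0` unless its `sInf` is over a set bounded below, so `D > 0` makes
`e^{-D}` a genuine lower bound. -/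
lemma exp_neg_chernoffInfo_le (hD : 0 < chernoffInfo P0 P1) {τ : ℝ} (hτ : τ ∈ Set.Icc (0 : ℝ) 1)
    (hpos : 0 < ∑ y, P0 y ^ τ * P1 y ^ (1 - τ)) :
    exp (-chernoffInfo P0 P1) ≤ ∑ y, P0 y ^ τ * P1 y ^ (1 - τ) := by
  have hbdd : BddBelow ((fun τ : ℝ => log (∑ y, P0 y ^ τ * P1 y ^ (1 - τ))) '' Set.Icc 0 1) := by
    by_contra h
    rw [chernoffInfo, Real.sInf_of_not_bddBelow h, neg_zero] at hD
    exact hD.false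
  rw [chernoffInfo, neg_neg, ← exp_log hpos]
  exact exp_le_exp.2 (csInf_le hbdd ⟨τ, hτ, rfl⟩)

variable (P0 P1)

def llr (y : α) : ℝ := log (P1 y) - log (P0 y)

/-- For `0 < τ < 1` this is `∑ y, P0 y ^ τ * P1 y ^ (1 - τ)` (`chernoffCoeff_eq_sum_rpow`); written
as a `P₁`-expectation of `exp (-τ llr)` it is smooth in `τ` on all of `ℝ`. -/
def chernoffCoeff (τ : ℝ) : ℝ := ∑ y, P1 y * exp (-(τ * llr P0 P1 y))

/-- The normalisation of `P₀ ^ τ * P₁ ^ (1 - τ)` on the support of `P₁`. -/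
def tilted (τ : ℝ) (y : α) : ℝ := P1 y * exp (-(τ * llr P0 P1 y)) / chernoffCoeff P0 P1 τ

variable {P0 P1}

lemma chernoffCoeff_zero (hs1 : ∑ z, P1 z = 1) : chernoffCoeff P0 P1 0 = 1 := by
  simpa [chernoffCoeff] using hs1

lemma chernoffCoeff_pos (h10 : ∀ z, 0 ≤ P1 z) (hs1 : ∑ z, P1 z = 1) (τ : ℝ) :
    0 < chernoffCoeff P0 P1 τ := by
  obtain ⟨y, -, hy⟩ := exists_ne_zero_of_sum_ne_zero (hs1.trans_ne one_ne_zero)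
  exact sum_pos' (fun z _ => mul_nonneg (h10 z) (exp_pos _).le)
    ⟨y, mem_univ y, mul_pos ((h10 y).lt_of_ne' hy) (exp_pos _)⟩

lemma hasDerivAt_chernoffCoeff (τ : ℝ) :
    HasDerivAt (chernoffCoeff P0 P1)
      (-∑ y, P1 y * llr P0 P1 y * exp (-(τ * llr P0 P1 y))) τ := by
  rw [← sum_neg_distrib]
  refine HasDerivAt.fun_sum fun y _ => ?_
  exact (((hasDerivAt_id' τ).mul_const _).fun_neg.exp.const_mul (P1 y)).congr_deriv (by ring)

lemma contDiff_chernoffCoeff : ContDiff ℝ 1 (chernoffCoeff P0 P1) := by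
  unfold chernoffCoeff
  fun_prop

lemma chernoffCoeff_eq_sum_rpow (h00 : ∀ z, 0 ≤ P0 z) (h10 : ∀ z, 0 ≤ P1 z)
    (habs : ∀ z, P0 z = 0 → P1 z = 0) {τ : ℝ} (hτ : τ ∈ Set.Ioo (0 : ℝ) 1) :
    chernoffCoeff P0 P1 τ = ∑ y, P0 y ^ τ * P1 y ^ (1 - τ) := by
  refine sum_congr rfl fun y _ => ?_
  rcases (h10 y).eq_or_lt with h1 | h1
  · rw [← h1, zero_rpow (by linarith [hτ.2]), zero_mul, mul_zero]
  have h0 : 0 < P0 y := (h00 y).lt_of_ne' fun h => h1.ne' (habs y h)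
  rw [rpow_def_of_pos h0, rpow_def_of_pos h1, ← exp_add, llr]
  nth_rewrite 1 [← exp_log h1]
  rw [← exp_add]
  congr 1
  ring

lemma tilted_nonneg (h10 : ∀ z, 0 ≤ P1 z) (hs1 : ∑ z, P1 z = 1) (τ : ℝ) (y : α) :
    0 ≤ tilted P0 P1 τ y :=
  div_nonneg (mul_nonneg (h10 y) (exp_pos _).le) (chernoffCoeff_pos h10 hs1 τ).le

lemma sum_tilted (h10 : ∀ z, 0 ≤ P1 z) (hs1 : ∑ z, P1 z = 1) (τ : ℝ) :
    ∑ y, tilted P0 P1 τ y = 1 := by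
  unfold tilted
  rw [← sum_div]
  exact div_self (chernoffCoeff_pos h10 hs1 τ).ne'

lemma sum_tilted_mul_llr (τ : ℝ) :
    ∑ y, tilted P0 P1 τ y * llr P0 P1 y =
      -deriv (chernoffCoeff P0 P1) τ / chernoffCoeff P0 P1 τ := by
  rw [(hasDerivAt_chernoffCoeff τ).deriv, neg_neg, sum_div]
  refine sum_congr rfl fun y _ => ?_
  unfold tilted
  ring

lemma pos_of_tilted_pos {τ : ℝ} {y : α} (hy : 0 < tilted P0 P1 τ y) (h10 : ∀ z, 0 ≤ P1 z) :
    0 < P1 y := by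
  refine (h10 y).lt_of_ne' fun h => hy.ne' ?_
  rw [tilted, h, zero_mul, zero_div]

lemma eq_chernoffCoeff_mul_tilted_mul_exp (h00 : ∀ z, 0 ≤ P0 z) (h10 : ∀ z, 0 ≤ P1 z)
    (hs1 : ∑ z, P1 z = 1) (habs : ∀ z, P0 z = 0 → P1 z = 0) (τ : ℝ) {y : α}
    (hy : 0 < tilted P0 P1 τ y) :
    P0 y = chernoffCoeff P0 P1 τ * tilted P0 P1 τ y * exp (-((1 - τ) * llr P0 P1 y)) := by
  have h1 := pos_of_tilted_pos hy h10
  have h0 : 0 < P0 y := (h00 y).lt_of_ne' fun h => h1.ne' (habs y h)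
  rw [tilted, mul_div_cancel₀ _ (chernoffCoeff_pos h10 hs1 τ).ne', mul_assoc, ← exp_add, llr]
  rw [show -(τ * (log (P1 y) - log (P0 y))) + -((1 - τ) * (log (P1 y) - log (P0 y)))
    = log (P0 y) - log (P1 y) by ring, exp_sub, exp_log h0, exp_log h1]
  field_simp

lemma filter_tilted_pos_subset (h00 : ∀ z, 0 ≤ P0 z) (h10 : ∀ z, 0 ≤ P1 z)
    (habs : ∀ z, P0 z = 0 → P1 z = 0) (τ : ℝ) (k : ℕ) :
    univ.filter (fun z : Fin k → α => (∀ i, 0 < tilted P0 P1 τ (z i)) ∧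
        0 ≤ ∑ i, llr P0 P1 (z i)) ⊆
      univ.filter (fun z : Fin k → α => ∏ i, P0 (z i) ≤ ∏ i, P1 (z i)) := by
  intro z hz
  simp only [mem_filter, mem_univ, true_and] at hz ⊢
  have h1 : ∀ i, 0 < P1 (z i) := fun i => pos_of_tilted_pos (hz.1 i) h10
  have h0 : ∀ i, 0 < P0 (z i) := fun i => (h00 _).lt_of_ne' fun h => (h1 i).ne' (habs _ h)
  rw [← log_le_log_iff (prod_pos fun i _ => h0 i) (prod_pos fun i _ => h1 i),
    log_prod fun i _ => (h0 i).ne', log_prod fun i _ => (h1 i).ne']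
  have := hz.2
  simp only [llr, sum_sub_distrib] at this
  linarith

lemma eventually_pow_le_lrErrP (h00 : ∀ z, 0 ≤ P0 z) (h10 : ∀ z, 0 ≤ P1 z)
    (hs0 : ∑ z, P0 z = 1) (hs1 : ∑ z, P1 z = 1) (habs : ∀ z, P0 z = 0 → P1 z = 0)
    (hD : 0 < chernoffInfo P0 P1) {ρ : ℝ} (hρ0 : 0 ≤ ρ) (hρ : ρ < exp (-chernoffInfo P0 P1)) :
    ∀ᶠ k in atTop, ρ ^ k ≤ lrErrP P0 P1 k := by
  set β := exp (-chernoffInfo P0 P1)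
  have hβ : 0 < β := exp_pos _
  have hgpos := chernoffCoeff_pos (P0 := P0) h10 hs1
  obtain ⟨τ₀, hτ₀, hZτ₀⟩ := exists_sum_rpow_lt_one hs0 hs1 hD
  set γ := (1 - ρ / β) / 2
  have hγ : 0 < γ := by have := (div_lt_one hβ).2 hρ; simp only [γ]; linarith
  obtain ⟨τ, hτ, hderiv, hloss⟩ := exists_deriv_neg_and_mul_deriv_div_lt contDiff_chernoffCoeff
    hgpos hτ₀ (by rwa [chernoffCoeff_zero hs1, chernoffCoeff_eq_sum_rpow h00 h10 habs hτ₀]) hγ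
  set μ := -deriv (chernoffCoeff P0 P1) τ / chernoffCoeff P0 P1 τ
  have hμ : 0 < μ := div_pos (neg_pos.2 hderiv) (hgpos τ)
  have hβg : β ≤ chernoffCoeff P0 P1 τ := by
    have := hgpos τ
    rw [chernoffCoeff_eq_sum_rpow h00 h10 habs hτ] at this ⊢
    exact exp_neg_chernoffInfo_le hD (Set.Ioo_subset_Icc_self hτ) this
  have hρx : ρ < chernoffCoeff P0 P1 τ * exp (-(2 * (1 - τ) * μ)) := by
    have hloss' : (1 - τ) * μ < γ := by simpa [μ, mul_div_assoc, neg_div] using hloss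
    calc ρ = β * (1 - 2 * γ) := by simp only [γ]; field_simp; ring
      _ ≤ β * exp (-(2 * γ)) := by gcongr; linarith [add_one_le_exp (-(2 * γ))]
      _ < β * exp (-(2 * (1 - τ) * μ)) := mul_lt_mul_of_pos_left (exp_lt_exp.2 (by linarith)) hβ
      _ ≤ _ := by gcongr
  have hV := tendsto_natCast_atTop_atTop.eventually_ge_atTop
    ((2 * ∑ y, tilted P0 P1 τ y * (llr P0 P1 y - μ) ^ 2) / μ ^ 2)
  filter_upwards [eventually_pow_le_pow_div_two hρ0 hρx, eventually_gt_atTop 0, hV]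
    with k hkρ hk hkV
  rw [div_le_iff₀ (by positivity)] at hkV
  calc ρ ^ k ≤ (chernoffCoeff P0 P1 τ * exp (-(2 * (1 - τ) * μ))) ^ k / 2 := hkρ
    _ ≤ _ := pow_div_two_le_sum_pi_prod_filter (tilted_nonneg h10 hs1 τ) (sum_tilted h10 hs1 τ)
        (hgpos τ).le (by linarith [hτ.2])
        (fun y hy => eq_chernoffCoeff_mul_tilted_mul_exp h00 h10 hs1 habs τ hy)
        (sum_tilted_mul_llr τ) hμ hk hkV
    _ ≤ lrErrP P0 P1 k := sum_le_sum_of_subset_of_nonneg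
        (filter_tilted_pos_subset h00 h10 habs τ k) fun z _ _ => prod_nonneg fun i _ => h00 _

end Chernoff

section Poisson

lemma poissonP_nonneg {N : ℝ} (hN : 0 ≤ N) (k : ℕ) : 0 ≤ poissonP N k := by
  unfold poissonP; positivity

lemma hasSum_poissonP (μ : ℝ) : HasSum (poissonP μ) 1 := by
  have := (NormedSpace.expSeries_div_hasSum_exp μ).mul_left (exp (-μ))
  rw [← exp_eq_exp_ℝ, ← exp_add, neg_add_cancel, exp_zero] at this
  show HasSum (fun k => poissonP μ k) 1
  simpa only [poissonP, mul_div_assoc] using this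

lemma poissonP_mul_pow (N ρ : ℝ) (k : ℕ) :
    poissonP N k * ρ ^ k = exp (-(N * (1 - ρ))) * poissonP (N * ρ) k := by
  simp only [poissonP, mul_pow]
  rw [show -(N * (1 - ρ)) = -N + N * ρ by ring, exp_add, exp_neg (N * ρ)]
  field_simp

lemma hasSum_poissonP_mul_pow (N ρ : ℝ) :
    HasSum (fun k => poissonP N k * ρ ^ k) (exp (-(N * (1 - ρ)))) := by
  simpa [poissonP_mul_pow] using (hasSum_poissonP (N * ρ)).mul_left (exp (-(N * (1 - ρ))))

lemma tendsto_poissonP_atTop (k : ℕ) : Tendsto (fun μ => poissonP μ k) atTop (𝓝 0) := by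
  simpa [poissonP, mul_comm, mul_div_assoc] using
    (tendsto_pow_mul_exp_neg_atTop_nhds_zero k).div_const (k.factorial : ℝ)

variable {a : ℕ → ℝ} {N ρ σ : ℝ}

lemma summable_poissonP_mul (hN : 0 ≤ N) (ha0 : ∀ k, 0 ≤ a k) (ha : ∀ k, a k ≤ σ ^ k) :
    Summable fun k => poissonP N k * a k :=
  (hasSum_poissonP_mul_pow N σ).summable.of_nonneg_of_le
    (fun k => mul_nonneg (poissonP_nonneg hN k) (ha0 k))
    fun k => mul_le_mul_of_nonneg_left (ha k) (poissonP_nonneg hN k)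

lemma tsum_poissonP_mul_le (hN : 0 ≤ N) (ha0 : ∀ k, 0 ≤ a k) (ha : ∀ k, a k ≤ ρ ^ k) :
    ∑' k, poissonP N k * a k ≤ exp (-(N * (1 - ρ))) :=
  hasSum_le (fun k => mul_le_mul_of_nonneg_left (ha k) (poissonP_nonneg hN k))
    (summable_poissonP_mul hN ha0 ha).hasSum (hasSum_poissonP_mul_pow N ρ)

/-- If `a k ≥ ρ ^ k` from `k₀` on, the Poisson average of `a` is at least
`e^{-N(1-ρ)} (1 - P(Poisson(Nρ) < k₀))`, and the bracket tends to `1`. -/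
lemma eventually_exp_le_tsum_poissonP_mul (ha0 : ∀ k, 0 ≤ a k) (haσ : ∀ k, a k ≤ σ ^ k)
    (hρ : 0 < ρ) (hρa : ∀ᶠ k in atTop, ρ ^ k ≤ a k) {c : ℝ} (hc : 1 - ρ < c) :
    ∀ᶠ N in atTop, exp (-(c * N)) ≤ ∑' k, poissonP N k * a k := by
  obtain ⟨k₀, hk₀⟩ := eventually_atTop.1 hρa
  have htend : Tendsto (fun N => exp (-((c - (1 - ρ)) * N)) +
      ∑ k ∈ range k₀, poissonP (N * ρ) k) atTop (𝓝 0) := by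
    simpa using (tendsto_exp_neg_atTop_nhds_zero.comp
      (tendsto_id.const_mul_atTop (sub_pos.2 hc))).add
      (tendsto_finsetSum _ fun k _ => (tendsto_poissonP_atTop k).comp
        (tendsto_id.atTop_mul_const hρ))
  filter_upwards [htend.eventually_le_const zero_lt_one, eventually_ge_atTop 0] with N hN1 hN0
  set b := fun k => poissonP N k * ρ ^ k
  have hsum : HasSum (fun k => b k - if k ∈ range k₀ then b k else 0)
      (exp (-(N * (1 - ρ))) - ∑ k ∈ range k₀, b k) := by
    have hfin := hasSum_sum_of_ne_finset_zero (L := SummationFilter.unconditional ℕ)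
      (s := range k₀) (f := fun k => if k ∈ range k₀ then b k else 0) fun k hk => if_neg hk
    rw [sum_ite_mem, inter_self] at hfin
    exact (hasSum_poissonP_mul_pow N ρ).sub hfin
  have hle : ∀ k, b k - (if k ∈ range k₀ then b k else 0) ≤ poissonP N k * a k := by
    intro k
    split_ifs with hk
    · simpa using mul_nonneg (poissonP_nonneg hN0 k) (ha0 k)
    · simpa using mul_le_mul_of_nonneg_left (hk₀ k (by simpa using hk)) (poissonP_nonneg hN0 k)
  calc exp (-(c * N)) = exp (-(N * (1 - ρ))) * exp (-((c - (1 - ρ)) * N)) := by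
        rw [← exp_add]; ring_nf
    _ ≤ exp (-(N * (1 - ρ))) * (1 - ∑ k ∈ range k₀, poissonP (N * ρ) k) := by
        gcongr; linarith
    _ = exp (-(N * (1 - ρ))) - ∑ k ∈ range k₀, b k := by
        simp only [b, poissonP_mul_pow, mul_sub, mul_one, mul_sum]
    _ ≤ _ := hasSum_le hle hsum (summable_poissonP_mul hN0 ha0 haσ).hasSum

end Poisson

end ChernoffPoisson

open ChernoffPoisson

/-- Fix `ε > 0`, and let `P₀, P₁` be distributions on a fixed finite alphabet
with Chernoff information `D* = D(P₀,P₁) > 0` and `max_z P₁(z)/P₀(z) < ∞`. With a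
`Poisson(N)`-distributed sample size, the `P₀`-probability that the likelihood ratio favours
`P₁` is at most `exp(−N(1 − e^{−D*}))`, and for all sufficiently large `N` it is at least
`exp(−(1+ε)·N·(1 − e^{−D*}))`. -/
theorem chernoff_likelihood_ratio_poisson_bounds {α : Type*} [Fintype α] (ε : ℝ) (hε : 0 < ε)
    (P0 P1 : α → ℝ) (h00 : ∀ z, 0 ≤ P0 z) (h10 : ∀ z, 0 ≤ P1 z)
    (hs0 : ∑ z, P0 z = 1) (hs1 : ∑ z, P1 z = 1)
    (habs : ∀ z, P0 z = 0 → P1 z = 0)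
    (hD : 0 < chernoffInfo P0 P1) :
    (∀ N : ℝ, 0 ≤ N →
        (∑' k : ℕ, poissonP N k * lrErrP P0 P1 k)
          ≤ Real.exp (-(N * (1 - Real.exp (-chernoffInfo P0 P1))))) ∧
    (∃ N₀ : ℝ, ∀ N : ℝ, N₀ ≤ N →
        Real.exp (-((1+ε) * N * (1 - Real.exp (-chernoffInfo P0 P1))))
          ≤ ∑' k : ℕ, poissonP N k * lrErrP P0 P1 k) := by
  set β := exp (-chernoffInfo P0 P1)
  have hβ1 : β < 1 := exp_lt_one_iff.2 (neg_lt_zero.2 hD)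
  have hLR0 := lrErrP_nonneg (P1 := P1) h00
  have hLR := lrErrP_le_exp_neg_chernoffInfo_pow h00 h10
  refine ⟨fun N hN => tsum_poissonP_mul_le hN hLR0 hLR, ?_⟩
  obtain ⟨ρ, hρ, hρβ⟩ :=
    exists_between (max_lt (exp_pos _) (show 1 - (1 + ε) * (1 - β) < β by nlinarith))
  rw [max_lt_iff] at hρ
  obtain ⟨N₀, hN₀⟩ := eventually_atTop.1 <|
    eventually_exp_le_tsum_poissonP_mul (c := (1 + ε) * (1 - β)) hLR0 hLR hρ.1
      (eventually_pow_le_lrErrP h00 h10 hs0 hs1 habs hD hρ.1.le hρβ) (by linarith [hρ.2])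
  exact ⟨N₀, fun N hN => by convert hN₀ N hN using 3; ring⟩
end
end

section
/- Fix any ε > 0 and any 0 < θ < 1/2. Let N ~ Poisson(λ) and, conditional on N, let Z_1,…,Z_N be independent Bernoulli(θ) random variables. Then P{ Σ_{i=1}^N Z_i ≥ N/2 − ελ } ≤ exp( ε · 2·log((1−θ)/θ) · λ ) · exp{ −λ·(1 − e^{−KL(0.5‖θ)}) }. -/
/-!
Chernoff's tilting argument, conditionally on `N = k`: with `e^t = (1-θ)/θ`, weighting the
indicator of `j ≥ k/2 - ελ` by `e^{t(j - k/2 + ελ)} ≥ 1` bounds the binomial tail by `e^{tελ} r^k`,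
where `r = 2(1-θ)e^{-t/2} = 2√(θ(1-θ)) = e^{-KL(0.5‖θ)}`. Averaging `r^k` against `Poisson(λ)`
gives `e^{-λ(1-r)}`, and `tελ ≤ 2tελ` because `t ≥ 0` when `θ < 1/2`.
-/

open Filter

noncomputable section
attribute [local instance] Classical.propDecidable

open Real Finset

theorem binomial_tail_le_exp_mul_pow {p q t c : ℝ} (hp : 0 ≤ p) (hq : 0 ≤ q) (ht : 0 ≤ t)
    (k : ℕ) :
    ∑ j ∈ (range (k + 1)).filter (fun j : ℕ => c ≤ (j : ℝ)),
        (k.choose j : ℝ) * p ^ j * q ^ (k - j)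
      ≤ exp (-(t * c)) * (p * exp t + q) ^ k := by
  have hterm : ∀ j ∈ (range (k + 1)).filter (fun j : ℕ => c ≤ (j : ℝ)),
      (k.choose j : ℝ) * p ^ j * q ^ (k - j)
        ≤ exp (-(t * c)) * ((p * exp t) ^ j * q ^ (k - j) * k.choose j) := by
    intro j hj
    have hcj : c ≤ j := (mem_filter.mp hj).2
    have htilt : 1 ≤ exp (-(t * c)) * exp t ^ j := by
      rw [← exp_nat_mul, ← exp_add, one_le_exp_iff]
      nlinarith
    calc (k.choose j : ℝ) * p ^ j * q ^ (k - j)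
        = 1 * (p ^ j * q ^ (k - j) * k.choose j) := by ring
      _ ≤ exp (-(t * c)) * exp t ^ j * (p ^ j * q ^ (k - j) * k.choose j) := by
          gcongr
      _ = exp (-(t * c)) * ((p * exp t) ^ j * q ^ (k - j) * k.choose j) := by ring
  calc _ ≤ ∑ j ∈ (range (k + 1)).filter (fun j : ℕ => c ≤ (j : ℝ)),
          exp (-(t * c)) * ((p * exp t) ^ j * q ^ (k - j) * k.choose j) := sum_le_sum hterm
    _ ≤ ∑ j ∈ range (k + 1), exp (-(t * c)) * ((p * exp t) ^ j * q ^ (k - j) * k.choose j) :=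
        sum_le_sum_of_subset_of_nonneg (filter_subset _ _) fun _ _ _ => by positivity
    _ = exp (-(t * c)) * (p * exp t + q) ^ k := by rw [← mul_sum, add_pow]

theorem two_mul_one_sub_mul_exp_neg_half_log_odds {θ : ℝ} (hθ0 : 0 < θ) (hθ1 : θ < 1) :
    2 * (1 - θ) * exp (-(log ((1 - θ) / θ) / 2)) = exp (-KLhalf θ) := by
  have h1θ : 0 < 1 - θ := by linarith
  rw [← exp_log (by positivity : 0 < 2 * (1 - θ)), ← exp_add]
  congr 1
  have hhalf : log 0.5 = -log 2 := by rw [show (0.5 : ℝ) = 2⁻¹ by norm_num, log_inv]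
  unfold KLhalf
  rw [log_mul two_ne_zero h1θ.ne', log_div h1θ.ne' hθ0.ne', log_div (by norm_num) hθ0.ne',
    log_div (by norm_num) h1θ.ne', hhalf]
  ring

theorem binomial_tail_ge_half_sub_le {θ : ℝ} (hθ0 : 0 < θ) (hθ1 : θ ≤ 1 / 2) (δ : ℝ) (k : ℕ) :
    ∑ j ∈ (range (k + 1)).filter (fun j : ℕ => (k : ℝ) / 2 - δ ≤ (j : ℝ)),
        (k.choose j : ℝ) * θ ^ j * (1 - θ) ^ (k - j)
      ≤ exp (log ((1 - θ) / θ) * δ) * exp (-KLhalf θ) ^ k := by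
  have hKL := two_mul_one_sub_mul_exp_neg_half_log_odds hθ0 (by linarith)
  set t := log ((1 - θ) / θ)
  have hodds : exp t = (1 - θ) / θ := exp_log (by apply div_pos <;> linarith)
  have ht : 0 ≤ t := log_nonneg (by rw [le_div_iff₀ hθ0]; linarith)
  refine (binomial_tail_le_exp_mul_pow hθ0.le (by linarith) ht k).trans_eq ?_
  have hsplit : exp (-(t * (k / 2 - δ))) = exp (t * δ) * exp (-(t / 2)) ^ k := by
    rw [← exp_nat_mul, ← exp_add]
    ring_nf
  rw [hodds, mul_div_cancel₀ _ hθ0.ne', ← hKL, hsplit, ← two_mul, mul_assoc, ← mul_pow,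
    mul_comm (exp (-(t / 2)))]

theorem hasSum_poissonP_mul_pow (μ x : ℝ) :
    HasSum (fun k => poissonP μ k * x ^ k) (exp (-(μ * (1 - x)))) := by
  have hexp : HasSum (fun k => (μ * x) ^ k / k.factorial) (exp (μ * x)) := by
    rw [exp_eq_exp_ℝ]
    exact NormedSpace.expSeries_div_hasSum_exp (μ * x)
  have hterm : (fun k => poissonP μ k * x ^ k) =
      fun k => exp (-μ) * ((μ * x) ^ k / k.factorial) := by
    funext k
    unfold poissonP
    ring
  rw [hterm, show -(μ * (1 - x)) = -μ + μ * x by ring, exp_add]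
  exact hexp.mul_left _

theorem tsum_poissonP_mul_le_of_le_mul_pow {μ C r : ℝ} (hμ : 0 ≤ μ) {f : ℕ → ℝ}
    (hf0 : ∀ k, 0 ≤ f k) (hf : ∀ k, f k ≤ C * r ^ k) :
    ∑' k, poissonP μ k * f k ≤ C * exp (-(μ * (1 - r))) := by
  have hP : ∀ k, 0 ≤ poissonP μ k := fun k => by unfold poissonP; positivity
  have hle : ∀ k, poissonP μ k * f k ≤ C * (poissonP μ k * r ^ k) := fun k => by
    rw [mul_left_comm]
    exact mul_le_mul_of_nonneg_left (hf k) (hP k)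
  have hdom := (hasSum_poissonP_mul_pow μ r).mul_left C
  exact hasSum_le hle
    (Summable.of_nonneg_of_le (fun k => mul_nonneg (hP k) (hf0 k)) hle hdom.summable).hasSum hdom

/-- Let `N ~ Poisson(λ)` and, conditional on `N`, let `Z₁,…,Z_N` be i.i.d.
`Bernoulli(θ)` (so conditional on `N = k`, `Σᵢ Zᵢ ~ Binomial(k,θ)`). Then
`P{Σᵢ Zᵢ ≥ N/2 − ελ} ≤ exp(ε·2·log((1−θ)/θ)·λ)·exp(−λ(1 − e^{−KL(0.5‖θ)}))`. -/
theorem poisson_binomial_shifted_majority_bound (ε θ lam : ℝ)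
    (hε : 0 < ε) (hθ0 : 0 < θ) (hθ1 : θ < 1/2) (hlam : 0 ≤ lam) :
    (∑' k : ℕ, poissonP lam k *
        ∑ j ∈ (Finset.range (k+1)).filter (fun j : ℕ => (k : ℝ)/2 - ε * lam ≤ (j : ℝ)),
          (k.choose j : ℝ) * θ ^ j * (1-θ) ^ (k - j))
      ≤ Real.exp (ε * (2 * Real.log ((1-θ)/θ)) * lam) *
        Real.exp (-(lam * (1 - Real.exp (-KLhalf θ)))) := by
  have ht : 0 ≤ log ((1 - θ) / θ) := log_nonneg (by rw [le_div_iff₀ hθ0]; linarith)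
  have h1θ : 0 ≤ 1 - θ := by linarith
  calc _ ≤ exp (log ((1 - θ) / θ) * (ε * lam)) * exp (-(lam * (1 - exp (-KLhalf θ)))) :=
        tsum_poissonP_mul_le_of_le_mul_pow hlam
          (fun k => sum_nonneg fun j _ => by positivity)
          (binomial_tail_ge_half_sub_le hθ0 hθ1.le (ε * lam))
    _ ≤ _ := by
        refine mul_le_mul_of_nonneg_right (exp_le_exp.mpr ?_) (exp_pos _).le
        nlinarith [mul_nonneg ht (mul_nonneg hε.le hlam)]
end
end

section
/- Suppose N ~ Poisson(ελ) for some 0 < ε < 1 and λ > 0. Then for any constant c_1 > 2e, P{ N ≥ c_1·λ / log(1/ε) } ≤ 2·exp{ −c_1·λ/2 }. -/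
/-!
For `k ≥ t` the Poisson weight `e^{-μ} μ^k / k!` is at most `(eμ/k)^k ≤ (eμ/t)^k`, since
`k^k / k! ≤ e^k`; so the tail beyond `t` is dominated by a geometric tail of ratio `r = eμ/t`.
With `μ = ελ`, `L = log(1/ε)` and `t = c₁λ/L` the ratio is `r = eεL/c₁ < εL/2 = L e^{-L}/2`,
which is at most `1/2` and at most `e^{-L/2}`; hence the tail is at most
`2 r^t ≤ 2 e^{-Lt/2} = 2 e^{-c₁λ/2}`.
-/

open Filter

noncomputable section
attribute [local instance] Classical.propDecidable

open Real

lemma hasSum_ite_le_pow {r : ℝ} (h₀ : 0 ≤ r) (h₁ : r < 1) (n : ℕ) :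
    HasSum (fun k : ℕ => if n ≤ k then r ^ k else 0) (r ^ n * (1 - r)⁻¹) := by
  rw [← hasSum_nat_add_iff' n]
  have head : ∑ i ∈ Finset.range n, (if n ≤ i then r ^ i else 0) = 0 :=
    Finset.sum_eq_zero fun i hi => if_neg (by simpa using hi)
  simp only [head, sub_zero, le_add_iff_nonneg_left, zero_le, if_true, pow_add, mul_comm _ (r ^ n)]
  exact (hasSum_geometric_of_lt_one h₀ h₁).mul_left _

lemma tsum_ite_le_le_of_le_pow {f : ℕ → ℝ} {r t : ℝ} (h₀ : 0 ≤ r) (h₁ : r < 1)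
    (hf₀ : ∀ k, 0 ≤ f k) (hf : ∀ k : ℕ, t ≤ k → f k ≤ r ^ k) :
    ∑' k : ℕ, (if t ≤ k then f k else 0) ≤ r ^ ⌈t⌉₊ * (1 - r)⁻¹ := by
  have hg := hasSum_ite_le_pow h₀ h₁ ⌈t⌉₊
  have hle : ∀ k : ℕ, (if t ≤ k then f k else 0) ≤ if ⌈t⌉₊ ≤ k then r ^ k else 0 := by
    intro k
    simp only [Nat.ceil_le]
    split_ifs with hk
    exacts [hf k hk, le_rfl]
  have hnonneg : ∀ k : ℕ, 0 ≤ if t ≤ k then f k else 0 := fun k => by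
    split_ifs
    exacts [hf₀ k, le_rfl]
  rw [← hg.tsum_eq]
  exact (hg.summable.of_nonneg_of_le hnonneg hle).tsum_le_tsum hle hg.summable

lemma pow_le_factorial_mul_exp (n : ℕ) : (n : ℝ) ^ n ≤ n.factorial * exp n := by
  have := pow_div_factorial_le_exp (x := n) (Nat.cast_nonneg n) n
  rwa [div_le_iff₀ (by positivity), mul_comm] at this

lemma poissonP_le_pow {μ t : ℝ} (hμ : 0 ≤ μ) (ht : 0 < t) {k : ℕ} (hk : t ≤ k) :
    poissonP μ k ≤ (exp 1 * μ / t) ^ k := by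
  have hfac : (0 : ℝ) < k.factorial := by exact_mod_cast k.factorial_pos
  have htk : t ^ k ≤ k.factorial * exp k :=
    (pow_le_pow_left₀ ht.le hk k).trans (pow_le_factorial_mul_exp k)
  calc poissonP μ k ≤ μ ^ k / k.factorial := by
        unfold poissonP
        gcongr
        exact mul_le_of_le_one_left (by positivity) (exp_le_one_iff.mpr (by linarith))
    _ ≤ (exp 1 * μ / t) ^ k := by
        rw [div_pow, mul_pow, exp_one_pow, div_le_div_iff₀ hfac (by positivity)]
        calc μ ^ k * t ^ k ≤ μ ^ k * (k.factorial * exp k) := by gcongr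
          _ = exp k * μ ^ k * k.factorial := by ring

lemma tsum_ite_le_poissonP_le {μ t : ℝ} (hμ : 0 ≤ μ) (ht : 0 < t) (hr : exp 1 * μ / t < 1) :
    ∑' k : ℕ, (if t ≤ k then poissonP μ k else 0) ≤
      (exp 1 * μ / t) ^ ⌈t⌉₊ * (1 - exp 1 * μ / t)⁻¹ :=
  tsum_ite_le_le_of_le_pow (by positivity) hr (fun k => by unfold poissonP; positivity)
    fun _ hk => poissonP_le_pow hμ ht hk

lemma mul_exp_neg_div_two_le (x : ℝ) : x * exp (-x) / 2 ≤ exp (-(x / 2)) :=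
  calc x * exp (-x) / 2 = x / 2 * exp (-x) := by ring
    _ ≤ exp (x / 2) * exp (-x) := by gcongr; linarith [add_one_le_exp (x / 2)]
    _ = exp (-(x / 2)) := by rw [← exp_add]; ring_nf

lemma pow_natCeil_le_exp_neg_mul {r a t : ℝ} (hr₀ : 0 ≤ r) (hr : r ≤ exp (-a)) (ha : 0 ≤ a) :
    r ^ ⌈t⌉₊ ≤ exp (-(a * t)) :=
  calc r ^ ⌈t⌉₊ ≤ exp (-a) ^ ⌈t⌉₊ := by gcongr
    _ = exp (-(a * ⌈t⌉₊)) := by rw [← exp_nat_mul]; ring_nf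
    _ ≤ exp (-(a * t)) := by gcongr; exact Nat.le_ceil t

/-- If `N ~ Poisson(ελ)` with `0 < ε < 1`, `λ > 0`, then for any `c₁ > 2e`,
`P{N ≥ c₁λ/log(1/ε)} ≤ 2·exp(−c₁λ/2)`. -/
theorem poisson_tail_bound (ε lam c₁ : ℝ) (hε0 : 0 < ε) (hε1 : ε < 1) (hlam : 0 < lam)
    (hc : 2 * Real.exp 1 < c₁) :
    (∑' k : ℕ, if c₁ * lam / Real.log (1/ε) ≤ (k : ℝ) then poissonP (ε * lam) k else 0)
      ≤ 2 * Real.exp (-(c₁ * lam / 2)) := by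
  set L := log (1 / ε)
  have hL : 0 < L := log_pos (by rw [lt_div_iff₀ hε0]; linarith)
  have hε : ε = exp (-L) := by simp only [L, one_div, log_inv, neg_neg, exp_log hε0]
  have hc₀ : 0 < c₁ := by linarith [exp_pos 1]
  set t := c₁ * lam / L
  set r := exp 1 * (ε * lam) / t
  have hr₀ : 0 ≤ r := by positivity
  have hr : r ≤ L * exp (-L) / 2 := by
    have : r = exp 1 * (ε * L) / c₁ := by simp only [r, t]; field_simp
    rw [this, div_le_div_iff₀ hc₀ two_pos, ← hε]
    nlinarith [mul_pos hε0 hL]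
  have hr_half : r ≤ 1 / 2 := by
    linarith [mul_exp_neg_le_exp_neg_one L, exp_le_one_iff.mpr (neg_nonpos.mpr zero_le_one)]
  have hinv : (1 - r)⁻¹ ≤ 2 := by rw [inv_le_comm₀ (by linarith) two_pos]; linarith
  calc _ ≤ r ^ ⌈t⌉₊ * (1 - r)⁻¹ :=
        tsum_ite_le_poissonP_le (by positivity) (by positivity) (by linarith)
    _ ≤ exp (-(L / 2 * t)) * 2 :=
        mul_le_mul (pow_natCeil_le_exp_neg_mul hr₀ (hr.trans (mul_exp_neg_div_two_le L))
          (by positivity)) hinv (inv_nonneg.mpr (by linarith)) (exp_pos _).le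
    _ = 2 * exp (-(c₁ * lam / 2)) := by
        rw [mul_comm]; congr 2; simp only [t]; field_simp
end
end
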